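/- Let S be a (−1,−1)-balanced Freudenthal Kantor triple system over a field F of characteristic ≠ 2 and let e ∈ S with ⟨e|e⟩ ≠ 0. Define a new triple product on S by {x,y,z} := ⟨e|e⟩⁻¹ yxz. Then (S, {·,·,·}) is a generalized Jordan triple system: {u,v,{x,y,z}} = {{u,v,x},y,z} − {x,{v,u,y},z} + {x,y,{u,v,z}} for all u, v, x, y, z ∈ S. -/
import Mathlib


/-- The rescaled triple product `{x,y,z} := ⟨e|e⟩⁻¹ yxz` on a
`(−1,−1)`-balanced Freudenthal Kantor triple system. -/
noncomputable def tildeT {F S : Type*} [Field F] [AddCommGroup S] [Module F S]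
    (T : S →ₗ[F] S →ₗ[F] S →ₗ[F] S) (B : S →ₗ[F] S →ₗ[F] F) (e x y z : S) : S :=
  (B e e)⁻¹ • T y x z

/-- Let `S` be a `(−1,−1)`-balanced Freudenthal Kantor triple system over a field
of characteristic `≠ 2` (trilinear product `T` and nonzero symmetric bilinear form
`B` with the GJTS identity and `xxy = xyx = ⟨x|x⟩y`), and let `e ∈ S` with
`⟨e|e⟩ ≠ 0`.  Then `{x,y,z} := ⟨e|e⟩⁻¹ yxz` makes `S` a generalized Jordan
triple system. -/
theorem stmt11 {F S : Type*} [Field F] [AddCommGroup S] [Module F S]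
    (hchar : (2 : F) ≠ 0)
    (T : S →ₗ[F] S →ₗ[F] S →ₗ[F] S) (B : S →ₗ[F] S →ₗ[F] F)
    (hBsym : ∀ x y : S, B x y = B y x) (hBne : B ≠ 0)
    (gjts : ∀ u v x y z : S,
      T u v (T x y z) = T (T u v x) y z - T x (T v u y) z + T x y (T u v z))
    (hxxy : ∀ x y : S, T x x y = B x x • y)
    (hxyx : ∀ x y : S, T x y x = B x x • y)
    (e : S) (he : B e e ≠ 0) :
    ∀ u v x y z : S,
      tildeT T B e u v (tildeT T B e x y z) =
        tildeT T B e (tildeT T B e u v x) y z -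
          tildeT T B e x (tildeT T B e v u y) z +
          tildeT T B e x y (tildeT T B e u v z) := by
  have hlin : ∀ u v y : S, T u v y + T v u y = (2 * B u v) • y := by
    intro u v y
    have h := hxxy (u + v) y
    simp only [map_add, LinearMap.add_apply, hxxy] at h
    have hb : B v u = B u v := hBsym v u
    rw [hb, add_smul, add_smul, add_smul] at h
    have : T u v y + T v u y = (B u u • y + B u v • y + (B u v • y + B v v • y))
        - (B u u • y + B v v • y) := by
      rw [← h]; abel
    rw [this, two_mul, add_smul]; abel
  intro u v x y z
  have h1 : T v u y = (2 * B u v) • y - T u v y := by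
    have := hlin u v y; rw [← this]; abel
  have h2 : T u v x = (2 * B u v) • x - T v u x := by
    have h := hlin u v x
    rw [← h]; abel
  have key : T v u (T y x z) =
      T y (T v u x) z - T (T u v y) x z + T y x (T v u z) := by
    have g := gjts v u y x z
    rw [h1, h2] at g
    simp only [map_sub, LinearMap.sub_apply, map_smul, LinearMap.smul_apply] at g
    rw [g]; abel
  simp only [tildeT, map_smul, LinearMap.smul_apply, key, smul_sub, smul_add]
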